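/- Let P₁, P₂ be projections onto orthogonal subspaces H₁, H₂ of a finite-dimensional Hilbert space, and ρ a density operator with support H₁ ⊕ H₂ and P₂ρP₁ ≠ 0. Write the polar decomposition P₂ρP₁ = WN with N positive on K₁ = Supp(P₂ρP₁) and W a unitary from K₁ onto K₂ = Im(P₂ρP₁). Then any pair of isometries U_i : H_i ⊗ span{u} → H_i ⊗ E (i = 1,2) satisfying Tr_E[(U₁⊕U₂)(ρ ⊗ |u⟩⟨u|)(U₁⊕U₂)†] = ρ decomposes as U_i = V_i ⊕ Ṽ_i with V_i an isometry on K_i ⊗ span{u} → K_i ⊗ E, Ṽ_i on the orthogonal complements K_i^⊥ = H_i ⊖ K_i, and V₂ = (W ⊗ 1_E) V₁ (W† ⊗ |u⟩⟨u|). -/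

import Mathlib

/-!
Write `Φ X = Tr_E (V X Vᴴ)`, `Q₁ = WᴴW` and `Q₂ = WWᴴ`. Since `V` respects the blocks `H₁, H₂`,
`Φ` fixes the off-diagonal block `P₂ρP₁ = W N`. For `Z = V W - (W ⊗ 1) V` this gives
`Tr (Zᴴ Z N) = -Tr (Vᴴ ((1 - Q₁) ⊗ 1) V N)`, and both sides are nonnegative, so `Z N = 0`;
as `N` has support `K₁`, `V W = (W ⊗ 1) V Q₁`. This is the intertwining relation, and it shows that
`V` maps `K₁` into `K₁ ⊗ E` and `K₂` into `K₂ ⊗ E`.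

If `V` maps the range of a projection `Q` into that of `Q ⊗ 1`, then `Vᴴ (Q ⊗ 1) V - Q ≥ 0`, and its
trace against `ρ` is `Tr (Q Φ ρ) - Tr (Q ρ) = 0`; faithfulness of `ρ` forces `Vᴴ (Q ⊗ 1) V = Q`,
so `V` also maps the complement of `Q` into the complement of `Q ⊗ 1`.
-/

open Matrix BigOperators Kronecker
open scoped ComplexOrder

noncomputable section

/-- Partial trace over the ancilla factor `e`. -/
def ptrE {n e : Type*} [Fintype n] [Fintype e]
    (M : Matrix (n × e) (n × e) ℂ) : Matrix n n ℂ :=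
  Matrix.of fun i j => ∑ k, M (i, k) (j, k)

namespace Matrix

section Positivity

variable {𝕜 : Type*} [RCLike 𝕜] {m n : Type*} [Fintype n]

lemma trace_conjTranspose_mul_of_isHermitian {N : Matrix n n 𝕜} (hN : N.IsHermitian)
    (C : Matrix n n 𝕜) : (Cᴴ * N).trace = star (C * N).trace := by
  rw [← trace_conjTranspose, conjTranspose_mul, hN.eq, trace_mul_comm]

lemma mul_eq_zero_of_ker_le {N Q : Matrix n n 𝕜} (hN : N.IsHermitian) (hQ : Q.IsHermitian)
    (hker : ∀ x, N *ᵥ x = 0 → Q *ᵥ x = 0) {Y : Matrix m n 𝕜} (hYN : Y * N = 0) :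
    Y * Q = 0 := by
  have hcol : ∀ (M : Matrix n n 𝕜) j, M *ᵥ (fun k => Yᴴ k j) = fun i => (M * Yᴴ) i j :=
    fun M j => by ext i; simp [mulVec, dotProduct, mul_apply]
  have hNY : N * Yᴴ = 0 := by rw [← hN.eq, ← conjTranspose_mul, hYN, conjTranspose_zero]
  have hQY : Q * Yᴴ = 0 := by
    ext i j
    have h := congrFun (hker _ ((hcol N j).trans (by rw [hNY]; rfl))) i
    rwa [hcol] at h
  rw [← conjTranspose_conjTranspose Y, ← hQ.eq, ← conjTranspose_mul, hQY, conjTranspose_zero]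

lemma IsHermitian.mul_eq_self_of_mul_eq_self {P Q : Matrix n n 𝕜} (hP : P.IsHermitian)
    (hQ : Q.IsHermitian) (h : P * Q = Q) : Q * P = Q := by
  rw [← hP.eq, ← hQ.eq, ← conjTranspose_mul, h]

lemma conjTranspose_mul_mul_self_of_idempotent {P : Matrix n n 𝕜} (hP : P.IsHermitian)
    (hPP : P * P = P) (Z : Matrix n m 𝕜) : (P * Z)ᴴ * (P * Z) = Zᴴ * P * Z := by
  rw [conjTranspose_mul, hP.eq, Matrix.mul_assoc, ← Matrix.mul_assoc P, hPP, Matrix.mul_assoc]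

lemma mul_eq_self_of_conjTranspose_mul_mul_eq [DecidableEq n] {Q : Matrix n n 𝕜}
    (hQ : Q.IsHermitian) (hQQ : Q * Q = Q) {Y : Matrix n m 𝕜} (h : Yᴴ * Q * Y = Yᴴ * Y) :
    Q * Y = Y := by
  have hgram : ((1 - Q) * Y)ᴴ * ((1 - Q) * Y) = 0 := by
    rw [conjTranspose_mul_mul_self_of_idempotent (isHermitian_one.sub hQ)
      (by simp [Matrix.sub_mul, Matrix.mul_sub, hQQ]), Matrix.mul_sub, Matrix.sub_mul,
      Matrix.mul_one, h, sub_self]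
  have := conjTranspose_mul_self_eq_zero.1 hgram
  rwa [Matrix.sub_mul, Matrix.one_mul, sub_eq_zero, eq_comm] at this

section PartialIsometry

variable {W : Matrix n n 𝕜} (hW : W * Wᴴ * W = W)
include hW

lemma conjTranspose_mul_mul_conjTranspose : Wᴴ * W * Wᴴ = Wᴴ := by
  simpa only [conjTranspose_mul, conjTranspose_conjTranspose, Matrix.mul_assoc]
    using congrArg conjTranspose hW

lemma conjTranspose_mul_self_mul_conjTranspose_mul_self : Wᴴ * W * (Wᴴ * W) = Wᴴ * W := by
  rw [← Matrix.mul_assoc, conjTranspose_mul_mul_conjTranspose hW]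

lemma mul_conjTranspose_mul_self_mul_conjTranspose : W * Wᴴ * (W * Wᴴ) = W * Wᴴ := by
  rw [← Matrix.mul_assoc, hW]

end PartialIsometry

variable [DecidableEq n]

lemma posSemidef_one_sub_conjTranspose_mul_self {W : Matrix n n 𝕜} (hW : W * Wᴴ * W = W) :
    (1 - Wᴴ * W).PosSemidef := by
  have hQQ := conjTranspose_mul_self_mul_conjTranspose_mul_self hW
  have hproj : (1 - Wᴴ * W)ᴴ * (1 - Wᴴ * W) = 1 - Wᴴ * W := by
    rw [(isHermitian_one.sub (isHermitian_conjTranspose_mul_self W)).eq]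
    simp [Matrix.sub_mul, Matrix.mul_sub, hQQ]
  exact hproj ▸ posSemidef_conjTranspose_mul_self _

open scoped MatrixOrder in
lemma PosSemidef.exists_eq_conjTranspose_mul_self {A : Matrix n n 𝕜} (hA : A.PosSemidef) :
    ∃ a : Matrix n n 𝕜, A = aᴴ * a :=
  CStarAlgebra.nonneg_iff_eq_star_mul_self.mp hA.nonneg

omit [DecidableEq n] in
lemma trace_conjTranspose_mul_self_mul_conjTranspose_mul_self (a b : Matrix n n 𝕜) :
    (aᴴ * a * (bᴴ * b)).trace = ((a * bᴴ)ᴴ * (a * bᴴ)).trace := by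
  rw [conjTranspose_mul, conjTranspose_conjTranspose, ← Matrix.mul_assoc, trace_mul_comm,
    ← Matrix.mul_assoc]
  simp only [Matrix.mul_assoc]

lemma PosSemidef.trace_mul_nonneg {A B : Matrix n n 𝕜} (hA : A.PosSemidef)
    (hB : B.PosSemidef) : 0 ≤ (A * B).trace := by
  obtain ⟨a, rfl⟩ := hA.exists_eq_conjTranspose_mul_self
  obtain ⟨b, rfl⟩ := hB.exists_eq_conjTranspose_mul_self
  rw [trace_conjTranspose_mul_self_mul_conjTranspose_mul_self]
  exact (posSemidef_conjTranspose_mul_self _).trace_nonneg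

lemma PosSemidef.mul_eq_zero_of_trace_mul_eq_zero {A B : Matrix n n 𝕜} (hA : A.PosSemidef)
    (hB : B.PosSemidef) (h : (A * B).trace = 0) : A * B = 0 := by
  obtain ⟨a, rfl⟩ := hA.exists_eq_conjTranspose_mul_self
  obtain ⟨b, rfl⟩ := hB.exists_eq_conjTranspose_mul_self
  rw [trace_conjTranspose_mul_self_mul_conjTranspose_mul_self,
    trace_conjTranspose_mul_self_eq_zero_iff] at h
  calc aᴴ * a * (bᴴ * b) = aᴴ * (a * bᴴ) * b := by simp only [Matrix.mul_assoc]
    _ = 0 := by rw [h, Matrix.mul_zero, Matrix.zero_mul]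

lemma PosSemidef.eq_zero_of_trace_mul_eq_zero {A ρ : Matrix n n 𝕜} (hA : A.PosSemidef)
    (hρ : ρ.PosSemidef) (hker : ∀ x, ρ *ᵥ x = 0 → x = 0) (h : (A * ρ).trace = 0) : A = 0 := by
  simpa using mul_eq_zero_of_ker_le hρ.isHermitian isHermitian_one (by simpa using hker)
    (hA.mul_eq_zero_of_trace_mul_eq_zero hρ h)

end Positivity

section Ancilla

variable {n e : Type*} [Fintype n] [Fintype e]

lemma trace_ptrE (X : Matrix (n × e) (n × e) ℂ) : (ptrE X).trace = X.trace := by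
  simp only [trace, diag, ptrE, of_apply, Fintype.sum_prod_type]

variable [DecidableEq e]

omit [Fintype n] [Fintype e] in
lemma conjTranspose_kronecker_one (A : Matrix n n ℂ) :
    (A ⊗ₖ (1 : Matrix e e ℂ))ᴴ = Aᴴ ⊗ₖ 1 := by
  rw [conjTranspose_kronecker, conjTranspose_one]

omit [Fintype n] [Fintype e] in
lemma IsHermitian.kronecker_one {A : Matrix n n ℂ} (hA : A.IsHermitian) :
    (A ⊗ₖ (1 : Matrix e e ℂ)).IsHermitian := by
  rw [IsHermitian, conjTranspose_kronecker_one, hA.eq]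

omit [Fintype n] [Fintype e] in
lemma sub_kronecker_one (A B : Matrix n n ℂ) :
    (A - B) ⊗ₖ (1 : Matrix e e ℂ) = A ⊗ₖ 1 - B ⊗ₖ 1 := by
  ext ⟨i, k⟩ ⟨j, l⟩
  simp [sub_mul]

lemma kronecker_one_mul_kronecker_one (A B : Matrix n n ℂ) :
    (A ⊗ₖ (1 : Matrix e e ℂ)) * (B ⊗ₖ 1) = (A * B) ⊗ₖ 1 := by
  rw [← mul_kronecker_mul, Matrix.one_mul]

lemma ptrE_kronecker_one_mul (A : Matrix n n ℂ) (X : Matrix (n × e) (n × e) ℂ) :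
    ptrE ((A ⊗ₖ (1 : Matrix e e ℂ)) * X) = A * ptrE X := by
  ext i j
  simp [ptrE, mul_apply, Fintype.sum_prod_type, one_apply, Finset.mul_sum]
  exact Finset.sum_comm

lemma ptrE_mul_kronecker_one (A : Matrix n n ℂ) (X : Matrix (n × e) (n × e) ℂ) :
    ptrE (X * (A ⊗ₖ (1 : Matrix e e ℂ))) = ptrE X * A := by
  ext i j
  simp [ptrE, mul_apply, Fintype.sum_prod_type, one_apply, Finset.sum_mul]
  exact Finset.sum_comm

lemma trace_kronecker_one_mul (A : Matrix n n ℂ) (X : Matrix (n × e) (n × e) ℂ) :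
    ((A ⊗ₖ (1 : Matrix e e ℂ)) * X).trace = (A * ptrE X).trace := by
  rw [← ptrE_kronecker_one_mul, trace_ptrE]

end Ancilla

section Isometry

variable {n e : Type*} [Fintype n] [Fintype e] [DecidableEq e] {V : Matrix (n × e) n ℂ}

lemma trace_conjTranspose_mul_kronecker_one_mul_mul (A X : Matrix n n ℂ) :
    (Vᴴ * (A ⊗ₖ (1 : Matrix e e ℂ)) * V * X).trace = (A * ptrE (V * X * Vᴴ)).trace := by
  rw [← trace_kronecker_one_mul, Matrix.mul_assoc, Matrix.mul_assoc, trace_mul_comm]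
  simp only [Matrix.mul_assoc]

lemma ptrE_mul_mul_conjTranspose_of_commute {P P' : Matrix n n ℂ}
    (hP : (P ⊗ₖ (1 : Matrix e e ℂ)) * V = V * P)
    (hP' : (P' ⊗ₖ (1 : Matrix e e ℂ)) * V = V * P') (hP'h : P'.IsHermitian)
    (X : Matrix n n ℂ) :
    ptrE (V * (P * X * P') * Vᴴ) = P * ptrE (V * X * Vᴴ) * P' := by
  have hP'c : P' * Vᴴ = Vᴴ * (P' ⊗ₖ (1 : Matrix e e ℂ)) := by
    rw [← hP'h.eq, ← conjTranspose_mul, ← hP', conjTranspose_mul, conjTranspose_kronecker_one,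
      hP'h.eq]
  rw [← ptrE_kronecker_one_mul, ← ptrE_mul_kronecker_one]
  congr 1
  simp only [Matrix.mul_assoc, hP'c]
  simp only [← Matrix.mul_assoc, hP]

variable [DecidableEq n]

omit [DecidableEq e] in
lemma conjTranspose_mul_self_of_isometry (hiso : Vᴴ * V = 1) (X : Matrix n n ℂ) :
    (V * X)ᴴ * (V * X) = Xᴴ * X := by
  rw [conjTranspose_mul, Matrix.mul_assoc, ← Matrix.mul_assoc Vᴴ, hiso, Matrix.one_mul]

lemma kronecker_one_mul_eq_mul_of_add_eq_one {P₁ P₂ : Matrix n n ℂ} (hsum : P₁ + P₂ = 1)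
    (h₂₁ : (P₂ ⊗ₖ (1 : Matrix e e ℂ)) * V * P₁ = 0)
    (h₁₂ : (P₁ ⊗ₖ (1 : Matrix e e ℂ)) * V * P₂ = 0) :
    (P₁ ⊗ₖ (1 : Matrix e e ℂ)) * V = V * P₁ := by
  calc (P₁ ⊗ₖ (1 : Matrix e e ℂ)) * V
      = (P₁ ⊗ₖ (1 : Matrix e e ℂ)) * V * (P₁ + P₂) := by rw [hsum, Matrix.mul_one]
    _ = ((P₁ + P₂) ⊗ₖ (1 : Matrix e e ℂ)) * V * P₁ := by
        rw [Matrix.mul_add, h₁₂, add_kronecker, Matrix.add_mul, Matrix.add_mul, h₂₁]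
    _ = V * P₁ := by rw [hsum, one_kronecker_one, Matrix.one_mul]

lemma conjTranspose_mul_self_sub_kronecker_one_mul_add (hiso : Vᴴ * V = 1)
    (W : Matrix n n ℂ) :
    (V * W - (W ⊗ₖ (1 : Matrix e e ℂ)) * V)ᴴ * (V * W - (W ⊗ₖ (1 : Matrix e e ℂ)) * V)
      + Vᴴ * ((1 - Wᴴ * W) ⊗ₖ (1 : Matrix e e ℂ)) * V
      = Wᴴ * W + 1 - Vᴴ * (Wᴴ ⊗ₖ (1 : Matrix e e ℂ)) * V * W
        - (Vᴴ * (Wᴴ ⊗ₖ (1 : Matrix e e ℂ)) * V * W)ᴴ := by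
  have hAA := conjTranspose_mul_self_of_isometry hiso W
  have hBA : ((W ⊗ₖ (1 : Matrix e e ℂ)) * V)ᴴ * (V * W)
      = Vᴴ * (Wᴴ ⊗ₖ (1 : Matrix e e ℂ)) * V * W := by
    rw [conjTranspose_mul, conjTranspose_kronecker_one]
    simp only [Matrix.mul_assoc]
  have hAB : (V * W)ᴴ * ((W ⊗ₖ (1 : Matrix e e ℂ)) * V)
      = (Vᴴ * (Wᴴ ⊗ₖ (1 : Matrix e e ℂ)) * V * W)ᴴ := by
    rw [← hBA, conjTranspose_mul _ (V * W), conjTranspose_conjTranspose]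
  have hBB : ((W ⊗ₖ (1 : Matrix e e ℂ)) * V)ᴴ * ((W ⊗ₖ (1 : Matrix e e ℂ)) * V)
      = Vᴴ * ((Wᴴ * W) ⊗ₖ (1 : Matrix e e ℂ)) * V := by
    rw [conjTranspose_mul, conjTranspose_kronecker_one, Matrix.mul_assoc,
      ← Matrix.mul_assoc (Wᴴ ⊗ₖ _), kronecker_one_mul_kronecker_one, Matrix.mul_assoc]
  simp only [conjTranspose_sub, Matrix.sub_mul, Matrix.mul_sub, hAA, hAB, hBA, hBB,
    sub_kronecker_one, one_kronecker_one, Matrix.mul_one, hiso]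
  abel

lemma mul_sub_kronecker_one_mul_mul_eq_zero (hiso : Vᴴ * V = 1) {W N : Matrix n n ℂ}
    (hW : W * Wᴴ * W = W) (hN : N.PosSemidef) (hWN : Wᴴ * W * N = N)
    (hfix : ptrE (V * (W * N) * Vᴴ) = W * N) :
    (V * W - (W ⊗ₖ (1 : Matrix e e ℂ)) * V) * N = 0 := by
  set Z := V * W - (W ⊗ₖ (1 : Matrix e e ℂ)) * V
  set C := Vᴴ * (Wᴴ ⊗ₖ (1 : Matrix e e ℂ)) * V * W with hC
  set D := Vᴴ * ((1 - Wᴴ * W) ⊗ₖ (1 : Matrix e e ℂ)) * V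
  have hD : D.PosSemidef :=
    ((posSemidef_one_sub_conjTranspose_mul_self hW).kronecker .one)
      |>.conjTranspose_mul_mul_same V
  have hCN : (C * N).trace = N.trace := by
    rw [Matrix.mul_assoc, trace_conjTranspose_mul_kronecker_one_mul_mul, hfix,
      ← Matrix.mul_assoc, hWN]
  have hCN' : (Cᴴ * N).trace = N.trace := by
    rw [trace_conjTranspose_mul_of_isHermitian hN.isHermitian, hCN, ← trace_conjTranspose,
      hN.isHermitian.eq]
  have htr : (Zᴴ * Z * N).trace + (D * N).trace = 0 := by
    rw [← trace_add, ← Matrix.add_mul, conjTranspose_mul_self_sub_kronecker_one_mul_add hiso,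
      ← hC, Matrix.sub_mul, Matrix.sub_mul, Matrix.add_mul, trace_sub, trace_sub, trace_add, hCN,
      hCN', Matrix.one_mul, hWN]
    ring
  have hZZN : Zᴴ * Z * N = 0 :=
    (posSemidef_conjTranspose_mul_self Z).mul_eq_zero_of_trace_mul_eq_zero hN
      ((add_eq_zero_iff_of_nonneg ((posSemidef_conjTranspose_mul_self Z).trace_mul_nonneg hN)
        (hD.trace_mul_nonneg hN)).1 htr).1
  refine conjTranspose_mul_self_eq_zero.1 ?_
  rw [conjTranspose_mul, hN.isHermitian.eq, Matrix.mul_assoc, ← Matrix.mul_assoc Zᴴ, hZZN,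
    Matrix.mul_zero]

lemma mul_eq_kronecker_one_mul_mul_of_ptrE_eq (hiso : Vᴴ * V = 1) {W N : Matrix n n ℂ}
    (hW : W * Wᴴ * W = W) (hN : N.PosSemidef) (hWN : Wᴴ * W * N = N)
    (hker : ∀ x, N *ᵥ x = 0 → (Wᴴ * W) *ᵥ x = 0) (hfix : ptrE (V * (W * N) * Vᴴ) = W * N) :
    V * W = (W ⊗ₖ (1 : Matrix e e ℂ)) * V * (Wᴴ * W) := by
  have h := mul_eq_zero_of_ker_le hN.isHermitian (isHermitian_conjTranspose_mul_self W) hker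
    (mul_sub_kronecker_one_mul_mul_eq_zero hiso hW hN hWN hfix)
  rwa [Matrix.sub_mul, Matrix.mul_assoc V, ← Matrix.mul_assoc W, hW, sub_eq_zero] at h

/- `W ⊗ 1` is isometric on the range of `V Q₁`, since it maps `V Q₁ x` to `V W x`; hence that range
lies in the range of `Q₁ ⊗ 1`. -/
lemma kronecker_one_mul_mul_eq_mul_of_mul_eq (hiso : Vᴴ * V = 1) {W : Matrix n n ℂ}
    (hW : W * Wᴴ * W = W) (hVW : V * W = (W ⊗ₖ (1 : Matrix e e ℂ)) * V * (Wᴴ * W)) :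
    ((Wᴴ * W) ⊗ₖ (1 : Matrix e e ℂ)) * (V * (Wᴴ * W)) = V * (Wᴴ * W) := by
  refine mul_eq_self_of_conjTranspose_mul_mul_eq
    (isHermitian_conjTranspose_mul_self W).kronecker_one
    (by rw [kronecker_one_mul_kronecker_one,
      conjTranspose_mul_self_mul_conjTranspose_mul_self hW]) ?_
  calc (V * (Wᴴ * W))ᴴ * ((Wᴴ * W) ⊗ₖ (1 : Matrix e e ℂ)) * (V * (Wᴴ * W))
      = ((W ⊗ₖ (1 : Matrix e e ℂ)) * V * (Wᴴ * W))ᴴ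
          * ((W ⊗ₖ (1 : Matrix e e ℂ)) * V * (Wᴴ * W)) := by
        rw [← kronecker_one_mul_kronecker_one, ← conjTranspose_kronecker_one]
        simp only [conjTranspose_mul, Matrix.mul_assoc]
    _ = (V * (Wᴴ * W))ᴴ * (V * (Wᴴ * W)) := by
        rw [← hVW, conjTranspose_mul_self_of_isometry hiso,
          conjTranspose_mul_self_of_isometry hiso, (isHermitian_conjTranspose_mul_self W).eq,
          conjTranspose_mul_self_mul_conjTranspose_mul_self hW]

lemma kronecker_one_mul_eq_mul_of_invariant {ρ : Matrix n n ℂ} (hρ : ρ.PosSemidef)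
    (hker : ∀ x, ρ *ᵥ x = 0 → x = 0) (hiso : Vᴴ * V = 1) (hpre : ptrE (V * ρ * Vᴴ) = ρ)
    {Q : Matrix n n ℂ} (hQ : Q.IsHermitian) (hQQ : Q * Q = Q)
    (hVQ : (Q ⊗ₖ (1 : Matrix e e ℂ)) * V * Q = V * Q) :
    (Q ⊗ₖ (1 : Matrix e e ℂ)) * V = V * Q := by
  set R := Vᴴ * (Q ⊗ₖ (1 : Matrix e e ℂ)) * V
  have hR : R.IsHermitian := isHermitian_conjTranspose_mul_mul V hQ.kronecker_one
  have hRQ : R * Q = Q := by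
    simp only [R, Matrix.mul_assoc] at hVQ ⊢
    rw [hVQ, ← Matrix.mul_assoc, hiso, Matrix.one_mul]
  have hQR : Q * R = Q := by
    simpa only [conjTranspose_mul, hR.eq, hQ.eq] using congrArg conjTranspose hRQ
  have hgram : ((Q ⊗ₖ (1 : Matrix e e ℂ)) * (V * (1 - Q)))ᴴ
      * ((Q ⊗ₖ (1 : Matrix e e ℂ)) * (V * (1 - Q))) = R - Q := by
    rw [conjTranspose_mul_mul_self_of_idempotent hQ.kronecker_one
      (by rw [kronecker_one_mul_kronecker_one, hQQ])]
    calc (V * (1 - Q))ᴴ * (Q ⊗ₖ (1 : Matrix e e ℂ)) * (V * (1 - Q))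
        = (1 - Q) * R * (1 - Q) := by
          rw [conjTranspose_mul, conjTranspose_sub, conjTranspose_one, hQ.eq]
          simp only [R, Matrix.mul_assoc]
      _ = R - Q := by
          simp only [Matrix.sub_mul, Matrix.mul_sub, Matrix.one_mul, Matrix.mul_one, hRQ, hQR,
            hQQ]
          abel
  have hY : (Q ⊗ₖ (1 : Matrix e e ℂ)) * (V * (1 - Q)) = 0 := by
    refine conjTranspose_mul_self_eq_zero.1 <| (posSemidef_conjTranspose_mul_self _)
      |>.eq_zero_of_trace_mul_eq_zero hρ hker ?_
    rw [hgram, Matrix.sub_mul, trace_sub, trace_conjTranspose_mul_kronecker_one_mul_mul, hpre,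
      sub_self]
  rwa [Matrix.mul_sub, Matrix.mul_one, Matrix.mul_sub, ← Matrix.mul_assoc, hVQ,
    sub_eq_zero] at hY

omit [DecidableEq n] in
lemma kronecker_one_mul_mul_sub_eq_zero {P Q : Matrix n n ℂ} (hQQ : Q * Q = Q)
    (hPQ : P * Q = Q) (hQP : Q * P = Q) (hVQ : (Q ⊗ₖ (1 : Matrix e e ℂ)) * V = V * Q) :
    (Q ⊗ₖ (1 : Matrix e e ℂ)) * V * (P - Q) = 0 ∧
      ((P - Q) ⊗ₖ (1 : Matrix e e ℂ)) * V * Q = 0 := by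
  constructor
  · rw [hVQ, Matrix.mul_assoc, Matrix.mul_sub, hQP, hQQ, sub_self, Matrix.mul_zero]
  · rw [Matrix.mul_assoc, ← hVQ, ← Matrix.mul_assoc, kronecker_one_mul_kronecker_one,
      Matrix.sub_mul, hPQ, hQQ, sub_self, zero_kronecker, Matrix.zero_mul]

end Isometry

end Matrix

theorem stmt7_general {n e : Type*} [Fintype n] [DecidableEq n] [Fintype e] [DecidableEq e]
    (ρ : Matrix n n ℂ) (hρ : ρ.PosSemidef)
    (P₁ P₂ : Matrix n n ℂ)
    (h1h : P₁.IsHermitian)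
    (h2h : P₂.IsHermitian)
    (hsum : P₁ + P₂ = 1)
    (hfull : ∀ x : n → ℂ, ρ.mulVec x = 0 → x = 0)
    (W Nm : Matrix n n ℂ)
    (hpolar : P₂ * ρ * P₁ = W * Nm)
    (hNm : Nm.PosSemidef)
    (hWpi : W * Wᴴ * W = W)
    (hK1sub : P₁ * (Wᴴ * W) = Wᴴ * W)
    (hK2sub : P₂ * (W * Wᴴ) = W * Wᴴ)
    (hNsupp' : (Wᴴ * W) * Nm = Nm)
    (hNker : ∀ x : n → ℂ, Nm.mulVec x = 0 → (Wᴴ * W).mulVec x = 0)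
    (V : Matrix (n × e) n ℂ) (hiso : Vᴴ * V = 1)
    (hblock12 : (P₂ ⊗ₖ (1 : Matrix e e ℂ)) * V * P₁ = 0)
    (hblock21 : (P₁ ⊗ₖ (1 : Matrix e e ℂ)) * V * P₂ = 0)
    (hpre : ptrE (V * ρ * Vᴴ) = ρ) :
    ((Wᴴ * W) ⊗ₖ (1 : Matrix e e ℂ)) * V * (P₁ - Wᴴ * W) = 0 ∧
    ((P₁ - Wᴴ * W) ⊗ₖ (1 : Matrix e e ℂ)) * V * (Wᴴ * W) = 0 ∧
    ((W * Wᴴ) ⊗ₖ (1 : Matrix e e ℂ)) * V * (P₂ - W * Wᴴ) = 0 ∧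
    ((P₂ - W * Wᴴ) ⊗ₖ (1 : Matrix e e ℂ)) * V * (W * Wᴴ) = 0 ∧
    V * (W * Wᴴ) = (W ⊗ₖ (1 : Matrix e e ℂ)) * V * Wᴴ := by
  have hV₁ := kronecker_one_mul_eq_mul_of_add_eq_one hsum hblock12 hblock21
  have hV₂ := kronecker_one_mul_eq_mul_of_add_eq_one ((add_comm P₂ P₁).trans hsum) hblock21
    hblock12
  have hfix : ptrE (V * (W * Nm) * Vᴴ) = W * Nm := by
    rw [← hpolar, ptrE_mul_mul_conjTranspose_of_commute hV₂ hV₁ h1h, hpre]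
  have hVW := mul_eq_kronecker_one_mul_mul_of_ptrE_eq hiso hWpi hNm hNsupp' hNker hfix
  have hVWW : V * (W * Wᴴ) = (W ⊗ₖ (1 : Matrix e e ℂ)) * V * Wᴴ := by
    rw [← Matrix.mul_assoc, hVW, Matrix.mul_assoc _ (Wᴴ * W),
      conjTranspose_mul_mul_conjTranspose hWpi]
  have hQ₁ : ((Wᴴ * W) ⊗ₖ (1 : Matrix e e ℂ)) * V = V * (Wᴴ * W) :=
    kronecker_one_mul_eq_mul_of_invariant hρ hfull hiso hpre
      (isHermitian_conjTranspose_mul_self W)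
      (conjTranspose_mul_self_mul_conjTranspose_mul_self hWpi)
      (by rw [Matrix.mul_assoc, kronecker_one_mul_mul_eq_mul_of_mul_eq hiso hWpi hVW])
  have hQ₂ : ((W * Wᴴ) ⊗ₖ (1 : Matrix e e ℂ)) * V = V * (W * Wᴴ) :=
    kronecker_one_mul_eq_mul_of_invariant hρ hfull hiso hpre
      (isHermitian_mul_conjTranspose_self W) (mul_conjTranspose_mul_self_mul_conjTranspose hWpi)
      (by rw [Matrix.mul_assoc, hVWW, ← Matrix.mul_assoc, ← Matrix.mul_assoc,
        kronecker_one_mul_kronecker_one, hWpi])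
  obtain ⟨h₁, h₂⟩ := kronecker_one_mul_mul_sub_eq_zero
    (conjTranspose_mul_self_mul_conjTranspose_mul_self hWpi) hK1sub
    (h1h.mul_eq_self_of_mul_eq_self (isHermitian_conjTranspose_mul_self W) hK1sub) hQ₁
  obtain ⟨h₃, h₄⟩ := kronecker_one_mul_mul_sub_eq_zero
    (mul_conjTranspose_mul_self_mul_conjTranspose hWpi) hK2sub
    (h2h.mul_eq_self_of_mul_eq_self (isHermitian_mul_conjTranspose_self W) hK2sub) hQ₂
  exact ⟨h₁, h₂, h₃, h₄, hVWW⟩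

/-- Theorem 2 of the paper: let `ρ` be a density operator with
support `H₁ ⊕ H₂` (here the whole space, `P₁ + P₂ = 1`), `P₂ρP₁ ≠ 0` with polar
decomposition `P₂ρP₁ = W·Nm` (`Nm ≥ 0` with support `K₁`, `W` a partial isometry
with support projection `WᴴW` onto `K₁ ⊆ H₁` and range projection `WWᴴ` onto
`K₂ ⊆ H₂`). Any blockwise isometry `U₁ ⊕ U₂` (as `V = (U₁⊕U₂)(· ⊗ |u⟩)`)
preserving `ρ` splits further as `U_i = V_i ⊕ Ṽ_i` along `K_i ⊕ K_i^⊥`, and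
`V₂ = (W ⊗ 1_E) V₁ (Wᴴ ⊗ Σ_E)`. -/
theorem stmt7 {n e : Type*} [Fintype n] [DecidableEq n] [Fintype e] [DecidableEq e]
    (ρ : Matrix n n ℂ) (hρ : ρ.PosSemidef) (htr : ρ.trace = 1)
    (P₁ P₂ : Matrix n n ℂ)
    (h1h : P₁.IsHermitian) (h1p : P₁ * P₁ = P₁)
    (h2h : P₂.IsHermitian) (h2p : P₂ * P₂ = P₂)
    (horth : P₁ * P₂ = 0) (hsum : P₁ + P₂ = 1)
    (hfull : ∀ x : n → ℂ, ρ.mulVec x = 0 → x = 0)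
    (hoff : P₂ * ρ * P₁ ≠ 0)
    (W Nm : Matrix n n ℂ)
    (hpolar : P₂ * ρ * P₁ = W * Nm)
    (hNm : Nm.PosSemidef)
    (hWpi : W * Wᴴ * W = W)
    (hK1sub : P₁ * (Wᴴ * W) = Wᴴ * W)
    (hK2sub : P₂ * (W * Wᴴ) = W * Wᴴ)
    (hNsupp : Nm * (Wᴴ * W) = Nm) (hNsupp' : (Wᴴ * W) * Nm = Nm)
    (hNker : ∀ x : n → ℂ, Nm.mulVec x = 0 → (Wᴴ * W).mulVec x = 0)
    (V : Matrix (n × e) n ℂ) (hiso : Vᴴ * V = 1)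
    (hblock12 : (P₂ ⊗ₖ (1 : Matrix e e ℂ)) * V * P₁ = 0)
    (hblock21 : (P₁ ⊗ₖ (1 : Matrix e e ℂ)) * V * P₂ = 0)
    (hpre : ptrE (V * ρ * Vᴴ) = ρ) :
    ((Wᴴ * W) ⊗ₖ (1 : Matrix e e ℂ)) * V * (P₁ - Wᴴ * W) = 0 ∧
    ((P₁ - Wᴴ * W) ⊗ₖ (1 : Matrix e e ℂ)) * V * (Wᴴ * W) = 0 ∧
    ((W * Wᴴ) ⊗ₖ (1 : Matrix e e ℂ)) * V * (P₂ - W * Wᴴ) = 0 ∧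
    ((P₂ - W * Wᴴ) ⊗ₖ (1 : Matrix e e ℂ)) * V * (W * Wᴴ) = 0 ∧
    V * (W * Wᴴ) = (W ⊗ₖ (1 : Matrix e e ℂ)) * V * Wᴴ :=
  stmt7_general ρ hρ P₁ P₂ h1h h2h hsum hfull W Nm hpolar hNm hWpi hK1sub hK2sub hNsupp' hNker V
    hiso hblock12 hblock21 hpre
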